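/- arXiv:2401.15802 — 9 statements merged into one kernel-verified Lean document; each statement's English description precedes it below -/
import Mathlib

section
/- Let Z_* > 0, A_* ∈ [0, Z_*), λ ≥ (3/2)Z_*, γ, ε ∈ ℝ, and let k be a nonzero integer. Let f(r) := sqrt(1 − 2A_*/r + Z_*^2/r^2) for r > 0. Let r₀ > 0 and let Ω : (0, r₀] → ℝ be differentiable and satisfy the Prüfer angle equation Ω'(r) = (2/f(r))·cos Ω(r) + (2/f(r))·(k/r − λ/r^2)·sin Ω(r) + (2/f(r)^2)·(γ/r − ε), and suppose lim_{r→0⁺} Ω(r) = 2πm for some integer m (the orbit emanates from the saddle S^−). Define R(r) := exp( − ∫_r^{r₀} [ sin Ω(s)/f(s) + (λ/s^2 − k/s)·cos Ω(s)/f(s) ] ds ). Then ∫_0^{r₀} R(r)^2 / f(r)^2 dr < ∞. -/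
/-!
Near `r = 0` the term `(λ / r²) cos Ω / f` dominates the integrand of the amplitude exponent,
and `cos Ω → 1` along an orbit leaving `S⁻`; so the integrand is nonnegative near `0`, the
exponent `-∫_r^{r₀}` is bounded above, and `R` is bounded on `(0, r₀]`. Since `0 ≤ A_* < Z_*`,
`f² ≥ (Z_*² - A_*²) / r²` stays away from `0` there, so `R² / f²` is a bounded continuous
function on a bounded interval.
-/

open MeasureTheory Set Filter Topology Real

section Primitive

variable {g : ℝ → ℝ} {a b : ℝ}

theorem continuousOn_integral_Ioc (hg : ContinuousOn g (Ioc a b)) :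
    ContinuousOn (fun r => ∫ s in r..b, g s) (Ioc a b) := by
  intro r hr
  obtain ⟨c, hac, hcr⟩ := exists_between hr.1
  have hcb : c ≤ b := hcr.le.trans hr.2
  have hsub : Icc c b ⊆ Ioc a b := Icc_subset_Ioc hac le_rfl
  have hint : IntegrableOn g (uIcc c b) := by
    rw [uIcc_of_le hcb]
    exact (hg.mono hsub).integrableOn_compact isCompact_Icc
  have hprim := intervalIntegral.continuousOn_primitive_interval_left hint
  rw [uIcc_of_le hcb] at hprim
  refine (hprim r ⟨hcr.le, hr.2⟩).mono_of_mem_nhdsWithin ?_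
  exact mem_nhdsWithin.2 ⟨Ioi c, isOpen_Ioi, hcr, fun x hx => ⟨le_of_lt hx.1, hx.2.2⟩⟩

theorem bddBelow_integral_Ioc_of_eventually_nonneg (hg : ContinuousOn g (Ioc a b))
    (hnonneg : ∀ᶠ s in 𝓝[>] a, 0 ≤ g s) :
    BddBelow ((fun r => ∫ s in r..b, g s) '' Ioc a b) := by
  rcases le_or_gt b a with hba | hab
  · simp [Ioc_eq_empty_of_le hba]
  obtain ⟨u, hau, hu⟩ := mem_nhdsGT_iff_exists_Ioc_subset.1 hnonneg
  set δ := min u b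
  have haδ : a < δ := lt_min hau hab
  have hδb : δ ≤ b := min_le_right u b
  have hcont := continuousOn_integral_Ioc hg
  obtain ⟨B, hB⟩ := isCompact_Icc.bddBelow_image (hcont.mono (Icc_subset_Ioc haδ le_rfl))
  refine ⟨B, ?_⟩
  rintro _ ⟨r, hr, rfl⟩
  rcases le_total δ r with hδr | hrδ
  · exact hB ⟨r, ⟨hδr, hr.2⟩, rfl⟩
  have hintegrable {x y : ℝ} (hx : a < x) (hxy : x ≤ y) (hy : y ≤ b) :
      IntervalIntegrable g volume x y :=
    (hg.mono (Icc_subset_Ioc hx hy)).intervalIntegrable_of_Icc hxy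
  have hhead : 0 ≤ ∫ s in r..δ, g s := intervalIntegral.integral_nonneg hrδ
    fun s hs => hu ⟨hr.1.trans_le hs.1, hs.2.trans (min_le_left u b)⟩
  have htail : B ≤ ∫ s in δ..b, g s := hB ⟨δ, ⟨le_rfl, hδb⟩, rfl⟩
  show B ≤ ∫ s in r..b, g s
  rw [← intervalIntegral.integral_add_adjacent_intervals
    (hintegrable hr.1 hrδ hδb) (hintegrable haδ hδb le_rfl)]
  linarith

theorem integrableOn_exp_neg_integral_sq_div_sq {f : ℝ → ℝ} {c : ℝ}
    (hg : ContinuousOn g (Ioc a b)) (hnonneg : ∀ᶠ s in 𝓝[>] a, 0 ≤ g s)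
    (hf : ContinuousOn f (Ioc a b)) (hc : 0 < c) (hfc : ∀ r ∈ Ioc a b, c ≤ f r ^ 2) :
    IntegrableOn (fun r => exp (-∫ s in r..b, g s) ^ 2 / f r ^ 2) (Ioc a b) := by
  obtain ⟨B, hB⟩ := bddBelow_integral_Ioc_of_eventually_nonneg hg hnonneg
  have hcont : ContinuousOn (fun r => exp (-∫ s in r..b, g s) ^ 2 / f r ^ 2) (Ioc a b) :=
    ((continuousOn_integral_Ioc hg).neg.rexp.pow 2).div (hf.pow 2)
      fun r hr => (hc.trans_le (hfc r hr)).ne'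
  refine .of_bound measure_Ioc_lt_top (hcont.aestronglyMeasurable measurableSet_Ioc)
    (exp (-B) ^ 2 / c) ((ae_restrict_iff' measurableSet_Ioc).2 (ae_of_all _ fun r hr => ?_))
  rw [norm_div, norm_pow, norm_pow, norm_of_nonneg (exp_pos _).le, norm_eq_abs, sq_abs]
  have := hB ⟨r, hr, rfl⟩
  gcongr
  exact hfc r hr

end Primitive

theorem eventually_pos_sin_add_mul_cos {Ω : ℝ → ℝ} {θ lam κ : ℝ}
    (hlim : Tendsto Ω (𝓝[>] 0) (𝓝 θ)) (hθ : 0 < cos θ) (hlam : 0 < lam) :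
    ∀ᶠ s in 𝓝[>] 0, 0 < sin (Ω s) + (lam / s ^ 2 - κ / s) * cos (Ω s) := by
  have hs : Tendsto (fun s : ℝ => s) (𝓝[>] 0) (𝓝 0) := nhdsWithin_le_nhds
  have hscaled : Tendsto (fun s => s ^ 2 * sin (Ω s) + (lam - κ * s) * cos (Ω s)) (𝓝[>] 0)
      (𝓝 (0 ^ 2 * sin θ + (lam - κ * 0) * cos θ)) :=
    ((hs.pow 2).mul (continuous_sin.tendsto θ |>.comp hlim)).add
      ((tendsto_const_nhds.sub (tendsto_const_nhds.mul hs)).mul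
        (continuous_cos.tendsto θ |>.comp hlim))
  have hpos : 0 < 0 ^ 2 * sin θ + (lam - κ * 0) * cos θ := by simpa using mul_pos hlam hθ
  filter_upwards [hscaled.eventually_const_lt hpos, self_mem_nhdsWithin] with s hscaled_pos (hs0 : 0 < s)
  have : sin (Ω s) + (lam / s ^ 2 - κ / s) * cos (Ω s)
      = (s ^ 2 * sin (Ω s) + (lam - κ * s) * cos (Ω s)) / s ^ 2 := by
    field_simp
  rw [this]
  exact div_pos hscaled_pos (by positivity)

section ReissnerWeylNordstrom

variable {A Z r : ℝ}

theorem rwn_radicand_eq (hr : r ≠ 0) :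
    1 - 2 * A / r + Z ^ 2 / r ^ 2 = ((r - A) ^ 2 + (Z ^ 2 - A ^ 2)) / r ^ 2 := by
  field_simp
  ring

theorem div_sq_le_rwn_radicand (hr : r ≠ 0) :
    (Z ^ 2 - A ^ 2) / r ^ 2 ≤ 1 - 2 * A / r + Z ^ 2 / r ^ 2 := by
  rw [rwn_radicand_eq hr]
  gcongr
  exact le_add_of_nonneg_left (sq_nonneg _)

theorem div_sq_le_sqrt_rwn_radicand_sq {r₀ : ℝ} (hAZ : A ^ 2 ≤ Z ^ 2) (hr : 0 < r)
    (hr₀ : r ≤ r₀) : (Z ^ 2 - A ^ 2) / r₀ ^ 2 ≤ √(1 - 2 * A / r + Z ^ 2 / r ^ 2) ^ 2 := by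
  have hle := div_sq_le_rwn_radicand (A := A) (Z := Z) hr.ne'
  have hnum : 0 ≤ Z ^ 2 - A ^ 2 := sub_nonneg.2 hAZ
  rw [sq_sqrt ((div_nonneg hnum (sq_nonneg r)).trans hle)]
  refine le_trans ?_ hle
  gcongr

theorem continuousOn_sqrt_rwn_radicand :
    ContinuousOn (fun r => √(1 - 2 * A / r + Z ^ 2 / r ^ 2)) {0}ᶜ := by
  fun_prop (disch := simp_all)

end ReissnerWeylNordstrom

theorem rwn_L2_near_zero_saddle_general (Zs As lam γ ε : ℝ) (k : ℤ)
    (hZ : 0 < Zs) (hAs : As ∈ Set.Ico (0 : ℝ) Zs) (hlam : (3 / 2) * Zs ≤ lam)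
    (f : ℝ → ℝ) (hf : ∀ r, f r = Real.sqrt (1 - 2 * As / r + Zs ^ 2 / r ^ 2))
    (r₀ : ℝ) (hr₀ : 0 < r₀) (Ω : ℝ → ℝ)
    (hΩ : ∀ r ∈ Set.Ioc (0 : ℝ) r₀, HasDerivAt Ω
      ((2 / f r) * Real.cos (Ω r)
        + (2 / f r) * ((k : ℝ) / r - lam / r ^ 2) * Real.sin (Ω r)
        + (2 / (f r) ^ 2) * (γ / r - ε)) r)
    (m : ℤ)
    (hlim : Filter.Tendsto Ω (nhdsWithin 0 (Set.Ioi 0)) (nhds (2 * Real.pi * (m : ℝ))))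
    (R : ℝ → ℝ)
    (hR : ∀ r, R r = Real.exp (-(∫ s in r..r₀,
      (Real.sin (Ω s) / f s + (lam / s ^ 2 - (k : ℝ) / s) * Real.cos (Ω s) / f s)))) :
    MeasureTheory.IntegrableOn (fun r => (R r) ^ 2 / (f r) ^ 2) (Set.Ioc 0 r₀) := by
  obtain rfl : R = _ := funext hR
  have hAZ : As ^ 2 < Zs ^ 2 := pow_lt_pow_left₀ hAs.2 hAs.1 two_ne_zero
  have hc : 0 < (Zs ^ 2 - As ^ 2) / r₀ ^ 2 := div_pos (sub_pos.2 hAZ) (by positivity)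
  have hf_lower : ∀ r ∈ Ioc 0 r₀, (Zs ^ 2 - As ^ 2) / r₀ ^ 2 ≤ f r ^ 2 := fun r hr => by
    rw [hf]
    exact div_sq_le_sqrt_rwn_radicand_sq hAZ.le hr.1 hr.2
  have hf_ne : ∀ r ∈ Ioc 0 r₀, f r ≠ 0 := fun r hr hfr => by
    have := hf_lower r hr
    simp only [hfr] at this
    linarith
  have hf_cont : ContinuousOn f (Ioc 0 r₀) := by
    rw [funext hf]
    exact continuousOn_sqrt_rwn_radicand.mono fun r hr => hr.1.ne'
  have hΩ_cont : ContinuousOn Ω (Ioc 0 r₀) := fun r hr =>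
    (hΩ r hr).continuousAt.continuousWithinAt
  have hr_ne : ∀ r ∈ Ioc (0 : ℝ) r₀, r ≠ 0 := fun r hr => hr.1.ne'
  have hr2_ne : ∀ r ∈ Ioc (0 : ℝ) r₀, r ^ 2 ≠ 0 := fun r hr => pow_ne_zero 2 (hr_ne r hr)
  refine integrableOn_exp_neg_integral_sq_div_sq (by fun_prop (disch := assumption)) ?_
    hf_cont hc hf_lower
  have hcos : 0 < cos (2 * π * m) := by
    rw [show 2 * π * m = m * (2 * π) by ring, cos_int_mul_two_pi]
    exact one_pos
  have hlam_pos : 0 < lam := by linarith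
  filter_upwards [eventually_pos_sin_add_mul_cos (κ := k) hlim hcos hlam_pos] with s hs
  rw [← add_div, hf]
  exact div_nonneg hs.le (sqrt_nonneg _)

/-- A Prüfer orbit emanating from the saddle `S⁻` (i.e. `Ω → 0 mod 2π`
as `r → 0⁺`) has square-integrable amplitude near `r = 0`. -/
theorem rwn_L2_near_zero_saddle (Zs As lam γ ε : ℝ) (k : ℤ)
    (hZ : 0 < Zs) (hAs : As ∈ Set.Ico (0 : ℝ) Zs) (hlam : (3 / 2) * Zs ≤ lam)
    (hk : k ≠ 0)
    (f : ℝ → ℝ) (hf : ∀ r, f r = Real.sqrt (1 - 2 * As / r + Zs ^ 2 / r ^ 2))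
    (r₀ : ℝ) (hr₀ : 0 < r₀) (Ω : ℝ → ℝ)
    (hΩ : ∀ r ∈ Set.Ioc (0 : ℝ) r₀, HasDerivAt Ω
      ((2 / f r) * Real.cos (Ω r)
        + (2 / f r) * ((k : ℝ) / r - lam / r ^ 2) * Real.sin (Ω r)
        + (2 / (f r) ^ 2) * (γ / r - ε)) r)
    (m : ℤ)
    (hlim : Filter.Tendsto Ω (nhdsWithin 0 (Set.Ioi 0)) (nhds (2 * Real.pi * (m : ℝ))))
    (R : ℝ → ℝ)
    (hR : ∀ r, R r = Real.exp (-(∫ s in r..r₀,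
      (Real.sin (Ω s) / f s + (lam / s ^ 2 - (k : ℝ) / s) * Real.cos (Ω s) / f s)))) :
    MeasureTheory.IntegrableOn (fun r => (R r) ^ 2 / (f r) ^ 2) (Set.Ioc 0 r₀) :=
  rwn_L2_near_zero_saddle_general Zs As lam γ ε k hZ hAs hlam f hf r₀ hr₀ Ω hΩ m hlim R hR
end

section
/- Let Z_* > 0, A_* ∈ [0, Z_*), λ, γ ∈ ℝ, ε ∈ (−1,1), and let k be a nonzero integer. Let f(r) := sqrt(1 − 2A_*/r + Z_*^2/r^2) for r > 0. Let r₁ > 0 and let Ω : [r₁, ∞) → ℝ be differentiable and satisfy the Prüfer angle equation Ω'(r) = (2/f(r))·cos Ω(r) + (2/f(r))·(k/r − λ/r^2)·sin Ω(r) + (2/f(r)^2)·(γ/r − ε), and suppose lim_{r→∞} Ω(r) = −arccos ε + 2πm for some integer m (the orbit ends at the saddle S^+_ε). Define R(r) := exp( ∫_{r₁}^{r} [ sin Ω(s)/f(s) + (λ/s^2 − k/s)·cos Ω(s)/f(s) ] ds ). Then ∫_{r₁}^{∞} R(r)^2 / f(r)^2 dr < ∞. -/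
/-! The amplitude satisfies `R² = exp (∫ 2 R'/R)`. Along an orbit ending at `S⁺_ε`, `sin Ω` tends to
`sin (-arccos ε) = -√(1 - ε²) < 0` while `f → 1` and the coefficient `λ/r² - k/r` of `cos Ω` tends
to `0`, so `R'/R` is eventually below `-√(1 - ε²)/2`. Hence `R²` decays exponentially, and since
`f` stays away from `0` when `0 ≤ A_* < Z_*`, so does `R²/f²`. -/

open Real Set Filter Topology MeasureTheory intervalIntegral

/-- The paper's `f`, with mass `A = A_*` and charge `Z = Z_*`. -/
noncomputable def rwnMetricCoeff (A Z r : ℝ) : ℝ :=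
  √(1 - 2 * A / r + Z ^ 2 / r ^ 2)

section rwnMetricCoeff

variable {A Z : ℝ}

theorem rwnMetricCoeff_pos (hAZ : A ^ 2 < Z ^ 2) {r : ℝ} (hr : r ≠ 0) :
    0 < rwnMetricCoeff A Z r := by
  have hsq : 1 - 2 * A / r + Z ^ 2 / r ^ 2 = (1 - A / r) ^ 2 + (Z ^ 2 - A ^ 2) / r ^ 2 := by
    field_simp
    ring
  unfold rwnMetricCoeff
  rw [hsq]
  have : 0 < (Z ^ 2 - A ^ 2) / r ^ 2 := div_pos (by linarith) (by positivity)
  positivity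

theorem continuousOn_rwnMetricCoeff : ContinuousOn (rwnMetricCoeff A Z) {0}ᶜ := by
  unfold rwnMetricCoeff
  fun_prop (disch := simp_all)

theorem tendsto_rwnMetricCoeff_atTop : Tendsto (rwnMetricCoeff A Z) atTop (𝓝 1) := by
  have h : Tendsto (fun r : ℝ => 1 - 2 * A / r + Z ^ 2 / r ^ 2) atTop (𝓝 (1 - 0 + 0)) :=
    (tendsto_const_nhds.sub (tendsto_const_nhds.div_atTop tendsto_id)).add
      (tendsto_const_nhds.div_atTop (tendsto_pow_atTop two_ne_zero))
  rw [sub_zero, add_zero] at h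
  have := (continuous_sqrt.tendsto 1).comp h
  rwa [sqrt_one] at this

end rwnMetricCoeff

theorem sin_neg_arccos_add_two_pi_mul (ε : ℝ) (m : ℤ) :
    sin (-arccos ε + 2 * π * m) = -√(1 - ε ^ 2) := by
  rw [show -arccos ε + 2 * π * m = -arccos ε + m * (2 * π) by ring, sin_add_int_mul_two_pi,
    sin_neg, sin_arccos]

theorem tendsto_pruferAmplitudeRate_atTop {Ω f : ℝ → ℝ} {θ : ℝ} (hΩ : Tendsto Ω atTop (𝓝 θ))
    (hf : Tendsto f atTop (𝓝 1)) (lam κ : ℝ) :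
    Tendsto (fun s => sin (Ω s) / f s + (lam / s ^ 2 - κ / s) * cos (Ω s) / f s) atTop
      (𝓝 (sin θ)) := by
  have hcoef : Tendsto (fun s : ℝ => lam / s ^ 2 - κ / s) atTop (𝓝 0) := by
    simpa using ((tendsto_const_nhds (x := lam)).div_atTop (tendsto_pow_atTop two_ne_zero)).sub
      ((tendsto_const_nhds (x := κ)).div_atTop tendsto_id)
  simpa using (((continuous_sin.tendsto θ).comp hΩ).div hf one_ne_zero).add
    ((hcoef.mul ((continuous_cos.tendsto θ).comp hΩ)).div hf one_ne_zero)

section ExpIntegral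

variable {h : ℝ → ℝ} {a : ℝ}

theorem continuousOn_primitive_Ici (hh : ContinuousOn h (Ici a)) :
    ContinuousOn (fun r => ∫ s in a..r, h s) (Ici a) := by
  intro x hx
  have hIcc : ContinuousOn (fun r => ∫ s in a..r, h s) (Icc a (x + 1)) := by
    have hle : a ≤ x + 1 := by linarith [mem_Ici.1 hx]
    have hI := continuousOn_primitive_interval (μ := volume)
      ((hh.mono (uIcc_of_le hle ▸ Icc_subset_Ici_self)).integrableOn_compact isCompact_uIcc)
    rwa [uIcc_of_le hle] at hI
  have hmem : Icc a (x + 1) ∈ 𝓝[Ici a] x :=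
    mem_nhdsWithin.2 ⟨Iio (x + 1), isOpen_Iio, by simp, fun y hy => ⟨hy.2, le_of_lt hy.1⟩⟩
  exact (hIcc x ⟨hx, by linarith⟩).mono_of_mem_nhdsWithin hmem

theorem isBigO_exp_integral_atTop {L c : ℝ} (hh : ContinuousOn h (Ici a))
    (hL : Tendsto h atTop (𝓝 L)) (hLc : L < c) :
    (fun r => exp (∫ s in a..r, h s)) =O[atTop] fun r => exp (c * r) := by
  obtain ⟨b₀, hb₀⟩ := eventually_atTop.1 (hL.eventually (eventually_le_nhds hLc))
  set b := max a b₀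
  have hint : ∀ x y, a ≤ x → a ≤ y → IntervalIntegrable h volume x y := fun x y hx hy =>
    (hh.mono fun s hs => le_trans (le_min hx hy) hs.1).intervalIntegrable
  refine Asymptotics.IsBigO.of_bound (exp ((∫ s in a..b, h s) - c * b)) ?_
  filter_upwards [eventually_ge_atTop b] with r hr
  have hab : a ≤ b := le_max_left _ _
  have htail : ∫ s in b..r, h s ≤ c * (r - b) := by
    calc ∫ s in b..r, h s ≤ ∫ _ in b..r, c :=
          integral_mono_on hr (hint _ _ hab (hab.trans hr)) intervalIntegrable_const
            fun s hs => hb₀ s ((le_max_right _ _).trans hs.1)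
      _ = c * (r - b) := by simp [mul_comm]
  rw [norm_of_nonneg (exp_pos _).le, norm_of_nonneg (exp_pos _).le, ← exp_add, exp_le_exp,
    ← integral_add_adjacent_intervals (hint _ _ le_rfl hab) (hint _ _ hab (hab.trans hr))]
  linarith

theorem integrableOn_Ici_exp_integral_div {g : ℝ → ℝ} {L l : ℝ} (hh : ContinuousOn h (Ici a))
    (hL : Tendsto h atTop (𝓝 L)) (hL0 : L < 0) (hg : ContinuousOn g (Ici a))
    (hg0 : ∀ r ∈ Ici a, g r ≠ 0) (hgl : Tendsto g atTop (𝓝 l)) (hl : l ≠ 0) :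
    IntegrableOn (fun r => exp (∫ s in a..r, h s) / g r) (Ici a) := by
  have hcont : ContinuousOn (fun r => exp (∫ s in a..r, h s) / g r) (Ici a) :=
    (continuousOn_primitive_Ici hh).rexp.div hg hg0
  have hexp := isBigO_exp_integral_atTop hh hL (c := -(-L / 2)) (by linarith)
  have hinv : (fun r => (g r)⁻¹) =O[atTop] fun _ => (1 : ℝ) := (hgl.inv₀ hl).isBigO_one ℝ
  have hO : (fun r => exp (∫ s in a..r, h s) / g r) =O[atTop] fun r => exp (-(-L / 2) * r) := by
    simpa [div_eq_mul_inv] using hexp.mul hinv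
  exact Iff.mpr integrableOn_Ici_iff_integrableOn_Ioi
    (integrable_of_isBigO_exp_neg (by linarith) hcont hO)

end ExpIntegral

theorem rwn_L2_near_infty_saddle_general (Zs As lam γ ε : ℝ) (k : ℤ)
    (hAs : As ∈ Set.Ico (0 : ℝ) Zs) (hε : ε ∈ Set.Ioo (-1 : ℝ) 1)
    (f : ℝ → ℝ) (hf : ∀ r, f r = Real.sqrt (1 - 2 * As / r + Zs ^ 2 / r ^ 2))
    (r₁ : ℝ) (hr₁ : 0 < r₁) (Ω : ℝ → ℝ)
    (hΩ : ∀ r ∈ Set.Ici r₁, HasDerivAt Ω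
      ((2 / f r) * Real.cos (Ω r)
        + (2 / f r) * ((k : ℝ) / r - lam / r ^ 2) * Real.sin (Ω r)
        + (2 / (f r) ^ 2) * (γ / r - ε)) r)
    (m : ℤ)
    (hlim : Filter.Tendsto Ω Filter.atTop
      (nhds (-Real.arccos ε + 2 * Real.pi * (m : ℝ))))
    (R : ℝ → ℝ)
    (hR : ∀ r, R r = Real.exp (∫ s in r₁..r,
      (Real.sin (Ω s) / f s + (lam / s ^ 2 - (k : ℝ) / s) * Real.cos (Ω s) / f s))) :
    MeasureTheory.IntegrableOn (fun r => (R r) ^ 2 / (f r) ^ 2) (Set.Ici r₁) := by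
  obtain ⟨hA0, hAZ⟩ := hAs
  obtain ⟨hε₁, hε₂⟩ := hε
  have hf' : f = rwnMetricCoeff As Zs := funext hf
  have hr₀ : ∀ r ∈ Ici r₁, r ≠ 0 := fun r hr => (hr₁.trans_le hr).ne'
  have hf₀ : ∀ r ∈ Ici r₁, f r ≠ 0 := fun r hr =>
    hf' ▸ (rwnMetricCoeff_pos (by nlinarith) (hr₀ r hr)).ne'
  have hfc : ContinuousOn f (Ici r₁) := hf' ▸ continuousOn_rwnMetricCoeff.mono hr₀
  have hf₁ : Tendsto f atTop (𝓝 1) := hf' ▸ tendsto_rwnMetricCoeff_atTop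
  have hΩc : ContinuousOn Ω (Ici r₁) := fun r hr => (hΩ r hr).continuousAt.continuousWithinAt
  set ρ : ℝ → ℝ := fun s => sin (Ω s) / f s + (lam / s ^ 2 - (k : ℝ) / s) * cos (Ω s) / f s
  have hρc : ContinuousOn ρ (Ici r₁) := by
    fun_prop (disch := first | exact hf₀ | exact fun r hr => pow_ne_zero 2 (hr₀ r hr) | exact hr₀)
  have hρlim : Tendsto ρ atTop (𝓝 (-√(1 - ε ^ 2))) := by
    simpa only [sin_neg_arccos_add_two_pi_mul] using
      tendsto_pruferAmplitudeRate_atTop hlim hf₁ lam (k : ℝ)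
  have hδ : 0 < √(1 - ε ^ 2) := sqrt_pos.2 (by nlinarith)
  have hR2 : (fun r => R r ^ 2 / f r ^ 2) = fun r => exp (∫ s in r₁..r, 2 * ρ s) / f r ^ 2 := by
    funext r
    rw [hR, intervalIntegral.integral_const_mul, ← exp_nat_mul]
    norm_num
  rw [hR2]
  exact integrableOn_Ici_exp_integral_div (hρc.const_mul 2) (hρlim.const_mul 2)
    (by linarith) (hfc.pow 2)
    (fun r hr => pow_ne_zero 2 (hf₀ r hr)) (hf₁.pow 2) (by norm_num)

/-- A Prüfer orbit ending at the saddle `S⁺_ε` (i.e. `Ω → −arccos ε mod 2π`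
as `r → ∞`) has square-integrable amplitude near `r = ∞`. -/
theorem rwn_L2_near_infty_saddle (Zs As lam γ ε : ℝ) (k : ℤ)
    (hZ : 0 < Zs) (hAs : As ∈ Set.Ico (0 : ℝ) Zs) (hε : ε ∈ Set.Ioo (-1 : ℝ) 1)
    (hk : k ≠ 0)
    (f : ℝ → ℝ) (hf : ∀ r, f r = Real.sqrt (1 - 2 * As / r + Zs ^ 2 / r ^ 2))
    (r₁ : ℝ) (hr₁ : 0 < r₁) (Ω : ℝ → ℝ)
    (hΩ : ∀ r ∈ Set.Ici r₁, HasDerivAt Ω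
      ((2 / f r) * Real.cos (Ω r)
        + (2 / f r) * ((k : ℝ) / r - lam / r ^ 2) * Real.sin (Ω r)
        + (2 / (f r) ^ 2) * (γ / r - ε)) r)
    (m : ℤ)
    (hlim : Filter.Tendsto Ω Filter.atTop
      (nhds (-Real.arccos ε + 2 * Real.pi * (m : ℝ))))
    (R : ℝ → ℝ)
    (hR : ∀ r, R r = Real.exp (∫ s in r₁..r,
      (Real.sin (Ω s) / f s + (lam / s ^ 2 - (k : ℝ) / s) * Real.cos (Ω s) / f s))) :
    MeasureTheory.IntegrableOn (fun r => (R r) ^ 2 / (f r) ^ 2) (Set.Ici r₁) :=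
  rwn_L2_near_infty_saddle_general Zs As lam γ ε k hAs hε f hf r₁ hr₁ Ω hΩ m hlim R hR
end

section
/- Let Z_* > 0, A_* ∈ [0, Z_*), λ, γ ∈ ℝ, ε ∈ (−1,1), and let k be a nonzero integer. Let f(r) := sqrt(1 − 2A_*/r + Z_*^2/r^2) for r > 0. Let r₁ > 0 and let Ω : [r₁, ∞) → ℝ be differentiable and satisfy the Prüfer angle equation Ω'(r) = (2/f(r))·cos Ω(r) + (2/f(r))·(k/r − λ/r^2)·sin Ω(r) + (2/f(r)^2)·(γ/r − ε), and suppose lim_{r→∞} Ω(r) = arccos ε + 2πm for some integer m (the orbit ends at the node N^+_ε). Define R(r) := exp( ∫_{r₁}^{r} [ sin Ω(s)/f(s) + (λ/s^2 − k/s)·cos Ω(s)/f(s) ] ds ). Then ∫_{r₁}^{∞} R(r)^2 / f(r)^2 dr = ∞. -/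
/-!
Along an orbit ending at `N⁺_ε` the logarithmic derivative `R'/R` of the Prüfer amplitude tends
to `sin (arccos ε) = √(1 - ε²) > 0`, because `f → 1` and the coefficient of `cos Ω` decays. Hence
`log R` grows at least linearly, `R² / f² → ∞`, and such a function is not integrable on any
half-line.
-/

open Filter Set MeasureTheory Real Topology

theorem not_integrableOn_Ici_of_tendsto_atTop {g : ℝ → ℝ} (a : ℝ)
    (hg : Tendsto g atTop atTop) : ¬ IntegrableOn g (Ici a) := by
  obtain ⟨b, hb⟩ := eventually_atTop.mp (hg.eventually_ge_atTop 1)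
  intro hint
  have hone : IntegrableOn (fun _ ↦ (1 : ℝ)) (Ici (max a b)) := by
    refine (hint.mono_set (Ici_subset_Ici.mpr (le_max_left a b))).mono'
      aestronglyMeasurable_const ?_
    filter_upwards [self_mem_ae_restrict measurableSet_Ici] with x hx
    simpa using hb x ((le_max_right a b).trans hx)
  simp [integrableOn_const_iff] at hone

theorem tendsto_intervalIntegral_atTop_of_tendsto_pos {h : ℝ → ℝ} {a L : ℝ}
    (hint : ∀ b ≥ a, IntervalIntegrable h volume a b) (hL : 0 < L)
    (hh : Tendsto h atTop (𝓝 L)) : Tendsto (fun r ↦ ∫ s in a..r, h s) atTop atTop := by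
  obtain ⟨b, hb⟩ := eventually_atTop.mp
    ((hh.eventually_const_le (half_lt_self hL)).and (eventually_ge_atTop a))
  have hab : a ≤ b := (hb b le_rfl).2
  have hlin : Tendsto (fun r ↦ (∫ s in a..b, h s) + (r - b) * (L / 2)) atTop atTop :=
    tendsto_atTop_add_const_left _ _
      ((tendsto_atTop_add_const_right _ _ tendsto_id).atTop_mul_const (half_pos hL))
  refine tendsto_atTop_mono' _ ?_ hlin
  filter_upwards [eventually_ge_atTop b] with r hr
  have har := hint r (hab.trans hr)
  have hsplit := intervalIntegral.integral_interval_sub_left har (hint b hab)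
  have hbound : (r - b) * (L / 2) ≤ ∫ s in b..r, h s := by
    simpa [mul_div_assoc] using intervalIntegral.integral_mono_on hr intervalIntegrable_const
      ((hint b hab).symm.trans har) fun x hx ↦ (hb x hx.1).1
  linarith

/-- The right-hand side of the Prüfer amplitude equation `R'/R = …`. -/
noncomputable def pruferAmplitudeRate (lam k : ℝ) (Ω f : ℝ → ℝ) (s : ℝ) : ℝ :=
  sin (Ω s) / f s + (lam / s ^ 2 - k / s) * cos (Ω s) / f s

theorem rwn_radicand_pos {A Z r : ℝ} (hAZ : A ^ 2 < Z ^ 2) (hr : r ≠ 0) :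
    0 < 1 - 2 * A / r + Z ^ 2 / r ^ 2 := by
  have hsq : 1 - 2 * A / r + Z ^ 2 / r ^ 2 = ((r - A) ^ 2 + (Z ^ 2 - A ^ 2)) / r ^ 2 := by
    field_simp
    ring
  rw [hsq]
  exact div_pos (by nlinarith [sq_nonneg (r - A)]) (by positivity)

theorem continuousOn_rwn_coefficient (A Z : ℝ) :
    ContinuousOn (fun r ↦ √(1 - 2 * A / r + Z ^ 2 / r ^ 2)) {0}ᶜ := by
  fun_prop (disch := intro x hx; simpa using hx)

theorem tendsto_rwn_coefficient_atTop (A Z : ℝ) :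
    Tendsto (fun r ↦ √(1 - 2 * A / r + Z ^ 2 / r ^ 2)) atTop (𝓝 1) := by
  have hinv : Tendsto (fun r : ℝ ↦ 2 * A / r) atTop (𝓝 0) :=
    tendsto_const_nhds.div_atTop tendsto_id
  have hinv_sq : Tendsto (fun r : ℝ ↦ Z ^ 2 / r ^ 2) atTop (𝓝 0) :=
    tendsto_const_nhds.div_atTop (tendsto_pow_atTop two_ne_zero)
  have hradicand : Tendsto (fun r : ℝ ↦ 1 - 2 * A / r + Z ^ 2 / r ^ 2) atTop (𝓝 1) := by
    simpa using (tendsto_const_nhds.sub hinv).add hinv_sq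
  simpa using hradicand.sqrt

theorem sin_arccos_add_two_pi_mul_pos {ε : ℝ} (hε : ε ∈ Ioo (-1 : ℝ) 1) (m : ℤ) :
    0 < sin (arccos ε + 2 * π * m) := by
  rw [show 2 * π * m = m * (2 * π) by ring, sin_add_int_mul_two_pi, sin_arccos]
  exact sqrt_pos.mpr (by nlinarith [hε.1, hε.2])

theorem continuousOn_pruferAmplitudeRate {lam k : ℝ} {Ω f : ℝ → ℝ} {s : Set ℝ}
    (hΩ : ContinuousOn Ω s) (hf : ContinuousOn f s) (hf0 : ∀ x ∈ s, f x ≠ 0) (h0 : 0 ∉ s) :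
    ContinuousOn (pruferAmplitudeRate lam k Ω f) s := by
  have hx0 : ∀ x ∈ s, x ≠ 0 := fun x hx hx0 ↦ h0 (hx0 ▸ hx)
  have hsq0 : ∀ x ∈ s, x ^ 2 ≠ 0 := fun x hx ↦ pow_ne_zero 2 (hx0 x hx)
  exact ((continuous_sin.comp_continuousOn hΩ).div hf hf0).add
    ((((continuousOn_const.div (continuousOn_id.pow 2) hsq0).sub
      (continuousOn_const.div continuousOn_id hx0)).mul
        (continuous_cos.comp_continuousOn hΩ)).div hf hf0)

theorem tendsto_pruferAmplitudeRate {lam k θ c : ℝ} {Ω f : ℝ → ℝ}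
    (hΩ : Tendsto Ω atTop (𝓝 θ)) (hf : Tendsto f atTop (𝓝 c)) (hc : c ≠ 0) :
    Tendsto (pruferAmplitudeRate lam k Ω f) atTop (𝓝 (sin θ / c)) := by
  have hinv_sq : Tendsto (fun s : ℝ ↦ lam / s ^ 2) atTop (𝓝 0) :=
    tendsto_const_nhds.div_atTop (tendsto_pow_atTop two_ne_zero)
  have hinv : Tendsto (fun s : ℝ ↦ k / s) atTop (𝓝 0) :=
    tendsto_const_nhds.div_atTop tendsto_id
  unfold pruferAmplitudeRate
  simpa using (((continuous_sin.tendsto θ).comp hΩ).div hf hc).add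
    (((hinv_sq.sub hinv).mul ((continuous_cos.tendsto θ).comp hΩ)).div hf hc)

theorem rwn_not_L2_near_infty_node_general (Zs As lam γ ε : ℝ) (k : ℤ)
    (hAs : As ∈ Set.Ico (0 : ℝ) Zs) (hε : ε ∈ Set.Ioo (-1 : ℝ) 1)
    (f : ℝ → ℝ) (hf : ∀ r, f r = Real.sqrt (1 - 2 * As / r + Zs ^ 2 / r ^ 2))
    (r₁ : ℝ) (hr₁ : 0 < r₁) (Ω : ℝ → ℝ)
    (hΩ : ∀ r ∈ Set.Ici r₁, HasDerivAt Ω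
      ((2 / f r) * Real.cos (Ω r)
        + (2 / f r) * ((k : ℝ) / r - lam / r ^ 2) * Real.sin (Ω r)
        + (2 / (f r) ^ 2) * (γ / r - ε)) r)
    (m : ℤ)
    (hlim : Filter.Tendsto Ω Filter.atTop
      (nhds (Real.arccos ε + 2 * Real.pi * (m : ℝ))))
    (R : ℝ → ℝ)
    (hR : ∀ r, R r = Real.exp (∫ s in r₁..r,
      (Real.sin (Ω s) / f s + (lam / s ^ 2 - (k : ℝ) / s) * Real.cos (Ω s) / f s))) :
    ¬ MeasureTheory.IntegrableOn (fun r => (R r) ^ 2 / (f r) ^ 2) (Set.Ici r₁) := by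
  have hAZ : As ^ 2 < Zs ^ 2 := pow_lt_pow_left₀ hAs.2 hAs.1 two_ne_zero
  have hfeq : f = fun r ↦ √(1 - 2 * As / r + Zs ^ 2 / r ^ 2) := funext hf
  have hf1 : Tendsto f atTop (𝓝 1) := hfeq ▸ tendsto_rwn_coefficient_atTop As Zs
  have hsub : Ici r₁ ⊆ {0}ᶜ := fun r hr ↦ (hr₁.trans_le hr).ne'
  have hcont : ContinuousOn (pruferAmplitudeRate lam k Ω f) (Ici r₁) :=
    continuousOn_pruferAmplitudeRate (fun r hr ↦ (hΩ r hr).continuousAt.continuousWithinAt)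
      ((hfeq ▸ continuousOn_rwn_coefficient As Zs).mono hsub)
      (fun r hr ↦ hf r ▸ (sqrt_pos.mpr (rwn_radicand_pos hAZ (hsub hr))).ne')
      fun h0 ↦ hsub h0 rfl
  have hlogR : Tendsto (fun r ↦ ∫ s in r₁..r, pruferAmplitudeRate lam k Ω f s) atTop atTop :=
    tendsto_intervalIntegral_atTop_of_tendsto_pos
      (fun b hb ↦ (hcont.mono Icc_subset_Ici_self).intervalIntegrable_of_Icc hb)
      (div_pos (sin_arccos_add_two_pi_mul_pos hε m) one_pos)
      (tendsto_pruferAmplitudeRate hlim hf1 one_ne_zero)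
  have hR2 : Tendsto (fun r ↦ R r ^ 2) atTop atTop := by
    simp only [hR]
    exact (tendsto_pow_atTop two_ne_zero).comp (tendsto_exp_atTop.comp hlogR)
  have hf2 : Tendsto (fun r ↦ (f r ^ 2)⁻¹) atTop (𝓝 1) := by
    simpa using (hf1.pow 2).inv₀ (by norm_num)
  exact not_integrableOn_Ici_of_tendsto_atTop r₁
    ((hR2.atTop_mul_pos one_pos hf2).congr fun r ↦ (div_eq_mul_inv _ _).symm)

/-- A Prüfer orbit ending at the node `N⁺_ε` (i.e. `Ω → arccos ε mod 2π`
as `r → ∞`) is never square integrable near `r = ∞`. -/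
theorem rwn_not_L2_near_infty_node (Zs As lam γ ε : ℝ) (k : ℤ)
    (hZ : 0 < Zs) (hAs : As ∈ Set.Ico (0 : ℝ) Zs) (hε : ε ∈ Set.Ioo (-1 : ℝ) 1)
    (hk : k ≠ 0)
    (f : ℝ → ℝ) (hf : ∀ r, f r = Real.sqrt (1 - 2 * As / r + Zs ^ 2 / r ^ 2))
    (r₁ : ℝ) (hr₁ : 0 < r₁) (Ω : ℝ → ℝ)
    (hΩ : ∀ r ∈ Set.Ici r₁, HasDerivAt Ω
      ((2 / f r) * Real.cos (Ω r)
        + (2 / f r) * ((k : ℝ) / r - lam / r ^ 2) * Real.sin (Ω r)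
        + (2 / (f r) ^ 2) * (γ / r - ε)) r)
    (m : ℤ)
    (hlim : Filter.Tendsto Ω Filter.atTop
      (nhds (Real.arccos ε + 2 * Real.pi * (m : ℝ))))
    (R : ℝ → ℝ)
    (hR : ∀ r, R r = Real.exp (∫ s in r₁..r,
      (Real.sin (Ω s) / f s + (lam / s ^ 2 - (k : ℝ) / s) * Real.cos (Ω s) / f s))) :
    ¬ MeasureTheory.IntegrableOn (fun r => (R r) ^ 2 / (f r) ^ 2) (Set.Ici r₁) :=
  rwn_not_L2_near_infty_node_general Zs As lam γ ε k hAs hε f hf r₁ hr₁ Ω hΩ m hlim R hR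
end

section
/- Let 𝒢 ∈ (0, 1], let γ < 0, set Z_* := −√𝒢 · γ, let A_* ∈ [0, Z_*), and let ε ∈ [−1, 1]. Then for every η ∈ (0,1): −2η^2/g(η) + (2η^2/g(η)^2)·(γ(1−η) − εη) < 0; equivalently, γ(1−η) − εη < g(η). (This is the statement that the compactified Prüfer vector field points strictly downward along the horizontal line Ω = π, which forces the winding number to satisfy w_ε ≥ 0.) -/
/-! Since `√𝒢 ≤ 1` we have `γ ≤ -Z_*`, and with `ε ≥ -1` this bounds `γ(1-η) - εη` by
`η - Z_*(1-η)`. Completing the square, `g(η)² = (η - Z_*(1-η))² + 2η(1-η)(Z_* - A_*)`, and the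
last term is positive on `(0,1)` because `A_* < Z_*`; hence `g(η) > |η - Z_*(1-η)|`. The Prüfer
component at `Ω = π` is `(2η²/g²)(γ(1-η) - εη - g)`, which is therefore negative. -/

theorem quadratic_eq_sq_add (A Z η : ℝ) :
    (1 + 2 * A + Z ^ 2) * η ^ 2 - 2 * (A + Z ^ 2) * η + Z ^ 2
      = (η - Z * (1 - η)) ^ 2 + 2 * η * (1 - η) * (Z - A) := by
  ring

theorem abs_sub_lt_sqrt_quadratic {A Z η : ℝ} (hAZ : A < Z) (hη : η ∈ Set.Ioo (0 : ℝ) 1) :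
    |η - Z * (1 - η)| < √((1 + 2 * A + Z ^ 2) * η ^ 2 - 2 * (A + Z ^ 2) * η + Z ^ 2) := by
  apply Real.lt_sqrt_of_sq_lt
  rw [sq_abs, quadratic_eq_sq_add]
  have : 0 < 2 * η * (1 - η) * (Z - A) :=
    mul_pos (mul_pos (mul_pos two_pos hη.1) (sub_pos.2 hη.2)) (sub_pos.2 hAZ)
  linarith

theorem neg_div_add_div_sq_mul_neg {c g x : ℝ} (hc : 0 < c) (hg : 0 < g) (hx : x < g) :
    -c / g + c / g ^ 2 * x < 0 := by
  have : -c / g + c / g ^ 2 * x = c / g ^ 2 * (x - g) := by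
    field_simp
    ring
  rw [this]
  exact mul_neg_of_pos_of_neg (by positivity) (sub_neg.2 hx)

/-- The compactified Prüfer vector field points strictly downward along the
horizontal line `Ω = π`, which forces the winding number to satisfy `w_ε ≥ 0`. -/
theorem rwn_upper_barrier (G γ : ℝ) (hG : G ∈ Set.Ioc (0 : ℝ) 1) (hγ : γ < 0)
    (Zs : ℝ) (hZs : Zs = -Real.sqrt G * γ)
    (As : ℝ) (hAs : As ∈ Set.Ico (0 : ℝ) Zs)
    (ε : ℝ) (hε : ε ∈ Set.Icc (-1 : ℝ) 1)
    (g : ℝ → ℝ)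
    (hg : ∀ η, g η =
      Real.sqrt ((1 + 2 * As + Zs ^ 2) * η ^ 2 - 2 * (As + Zs ^ 2) * η + Zs ^ 2))
    (η : ℝ) (hη : η ∈ Set.Ioo (0 : ℝ) 1) :
    -(2 * η ^ 2) / g η + (2 * η ^ 2 / (g η) ^ 2) * (γ * (1 - η) - ε * η) < 0 ∧
      γ * (1 - η) - ε * η < g η := by
  have hZγ : Zs ≤ -γ := by
    rw [hZs]
    nlinarith [Real.sqrt_le_one.2 hG.2]
  have hbound : γ * (1 - η) - ε * η ≤ η - Zs * (1 - η) := by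
    nlinarith [hη.1, hη.2, hε.1]
  have hgη : |η - Zs * (1 - η)| < g η := hg η ▸ abs_sub_lt_sqrt_quadratic hAs.2 hη
  have hlt : γ * (1 - η) - ε * η < g η := hbound.trans_lt ((le_abs_self _).trans_lt hgη)
  exact ⟨neg_div_add_div_sq_mul_neg (mul_pos two_pos (pow_pos hη.1 2))
    ((abs_nonneg _).trans_lt hgη) hlt, hlt⟩
end

section
/- Let γ ∈ [−1, 0), let Z_* be a real number with 0 < Z_* ≤ 10^{−21}, let A_* ∈ [0, Z_*/2], let λ ≥ (3/2)Z_*, and let k ≤ −1 be an integer. Then for every η ∈ (0,1): (2/g(η))·( −kη(1−η) + λ(1−η)^2 ) + (2η^2/g(η)^2)·γ(1−η) > 0. (This is the statement that at energy ε = 0 the compactified Prüfer vector field points strictly upward along the horizontal line Ω = −π/2, so that Ω = −π/2 is a lower barrier and the winding number satisfies w_0 = 0 for all k ≤ −1.) -/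
/-!
Put `u = η` and `v = Z_*(1 - η)`. The radicand of `g` equals `u² - 2A_*η(1 - η) + v²`, so
`A_* ≤ Z_*/2` gives `g² ≥ u² - uv + v²`, while `k ≤ -1` and `λ ≥ (3/2)Z_*` give
`R := -kη + λ(1 - η) ≥ u + (3/2)v`. Expanding, `(u² - uv + v²)(u + (3/2)v)² - u⁴` has only positive
coefficients, so `η² < g R`. The expression equals `(2(1 - η)/g²)(g R + γη²)`, and
`γ ≥ -1` makes the second factor at least `g R - η² > 0`.
-/

lemma radicand_eq (A Z η : ℝ) :
    (1 + 2 * A + Z ^ 2) * η ^ 2 - 2 * (A + Z ^ 2) * η + Z ^ 2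
      = η ^ 2 - 2 * A * (η * (1 - η)) + (Z * (1 - η)) ^ 2 := by
  ring

lemma sq_sub_mul_add_sq_le_radicand {A Z η : ℝ} (hA : A ≤ Z / 2) (hη₀ : 0 ≤ η) (hη₁ : η ≤ 1) :
    η ^ 2 - η * (Z * (1 - η)) + (Z * (1 - η)) ^ 2
      ≤ (1 + 2 * A + Z ^ 2) * η ^ 2 - 2 * (A + Z ^ 2) * η + Z ^ 2 := by
  rw [radicand_eq]
  nlinarith [mul_nonneg hη₀ (sub_nonneg.2 hη₁)]

lemma sq_sub_mul_add_sq_pos {u v : ℝ} (hv : 0 < v) : 0 < u ^ 2 - u * v + v ^ 2 := by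
  nlinarith [sq_nonneg (u - v / 2)]

lemma pow_four_lt_mul_sq {u v : ℝ} (hu : 0 < u) (hv : 0 < v) :
    u ^ 4 < (u ^ 2 - u * v + v ^ 2) * (u + 3 / 2 * v) ^ 2 := by
  have expand : (u ^ 2 - u * v + v ^ 2) * (u + 3 / 2 * v) ^ 2 - u ^ 4
      = 2 * u ^ 3 * v + u ^ 2 * v ^ 2 / 4 + 3 / 4 * u * v ^ 3 + 9 / 4 * v ^ 4 := by
    ring
  have : 0 < 2 * u ^ 3 * v + u ^ 2 * v ^ 2 / 4 + 3 / 4 * u * v ^ 3 + 9 / 4 * v ^ 4 := by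
    positivity
  linarith

lemma sq_lt_mul_of_le_sq_of_le {u v G R : ℝ} (hu : 0 < u) (hv : 0 < v) (hG₀ : 0 ≤ G)
    (hG : u ^ 2 - u * v + v ^ 2 ≤ G ^ 2) (hR : u + 3 / 2 * v ≤ R) : u ^ 2 < G * R := by
  have hR₀ : 0 ≤ u + 3 / 2 * v := by positivity
  have hsq : (u ^ 2) ^ 2 < (G * R) ^ 2 :=
    calc (u ^ 2) ^ 2 = u ^ 4 := by ring
      _ < (u ^ 2 - u * v + v ^ 2) * (u + 3 / 2 * v) ^ 2 := pow_four_lt_mul_sq hu hv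
      _ ≤ G ^ 2 * R ^ 2 := by gcongr
      _ = (G * R) ^ 2 := (mul_pow G R 2).symm
  exact lt_of_pow_lt_pow_left₀ 2 (mul_nonneg hG₀ (hR₀.trans hR)) hsq

lemma barrier_field_pos {G R η γ : ℝ} (hG : 0 < G) (hη : η < 1) (hγ : -1 ≤ γ)
    (hGR : η ^ 2 < G * R) :
    0 < (2 / G) * ((1 - η) * R) + (2 * η ^ 2 / G ^ 2) * γ * (1 - η) := by
  have hfactor : (2 / G) * ((1 - η) * R) + (2 * η ^ 2 / G ^ 2) * γ * (1 - η)
      = (2 * (1 - η) / G ^ 2) * (G * R + γ * η ^ 2) := by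
    field_simp
  have hsum : 0 < G * R + γ * η ^ 2 := by nlinarith [sq_nonneg η]
  rw [hfactor]
  exact mul_pos (div_pos (by linarith) (by positivity)) hsum

theorem rwn_lower_barrier_neg_k_general (γ Zs As lam : ℝ) (k : ℤ)
    (hγ : γ ∈ Set.Ico (-1 : ℝ) 0) (hZs : 0 < Zs)
    (hAs : As ∈ Set.Icc (0 : ℝ) (Zs / 2)) (hlam : (3 / 2) * Zs ≤ lam) (hk : k ≤ -1)
    (g : ℝ → ℝ)
    (hg : ∀ η, g η =
      Real.sqrt ((1 + 2 * As + Zs ^ 2) * η ^ 2 - 2 * (As + Zs ^ 2) * η + Zs ^ 2))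
    (η : ℝ) (hη : η ∈ Set.Ioo (0 : ℝ) 1) :
    (2 / g η) * (-(k : ℝ) * η * (1 - η) + lam * (1 - η) ^ 2)
      + (2 * η ^ 2 / (g η) ^ 2) * γ * (1 - η) > 0 := by
  obtain ⟨hη₀, hη₁⟩ := hη
  have hv : 0 < Zs * (1 - η) := mul_pos hZs (sub_pos.2 hη₁)
  have hQ := sq_sub_mul_add_sq_le_radicand hAs.2 hη₀.le hη₁.le
  have hQ₀ := (sq_sub_mul_add_sq_pos (u := η) hv).trans_le hQ
  have hG : (g η) ^ 2 = (1 + 2 * As + Zs ^ 2) * η ^ 2 - 2 * (As + Zs ^ 2) * η + Zs ^ 2 := by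
    rw [hg, Real.sq_sqrt hQ₀.le]
  have hG₀ : 0 < g η := by rw [hg]; exact Real.sqrt_pos.2 hQ₀
  have hR : η + 3 / 2 * (Zs * (1 - η)) ≤ -(k : ℝ) * η + lam * (1 - η) := by
    have hk' : (k : ℝ) ≤ -1 := by exact_mod_cast hk
    nlinarith [mul_le_mul_of_nonneg_right hlam (sub_pos.2 hη₁).le]
  have hGR := sq_lt_mul_of_le_sq_of_le hη₀ hv hG₀.le (hG ▸ hQ) hR
  have key := barrier_field_pos hG₀ hη₁ hγ.1 hGR
  rw [gt_iff_lt]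
  convert key using 2
  ring

/-- For `ε = 0` and `k ≤ −1`, the compactified Prüfer vector field points
strictly upward along the horizontal line `Ω = −π/2`, so `Ω = −π/2` is a lower barrier
(and the winding number satisfies `w₀ = 0`). -/
theorem rwn_lower_barrier_neg_k (γ Zs As lam : ℝ) (k : ℤ)
    (hγ : γ ∈ Set.Ico (-1 : ℝ) 0) (hZs : 0 < Zs) (hZs' : Zs ≤ 1e-21)
    (hAs : As ∈ Set.Icc (0 : ℝ) (Zs / 2)) (hlam : (3 / 2) * Zs ≤ lam) (hk : k ≤ -1)
    (g : ℝ → ℝ)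
    (hg : ∀ η, g η =
      Real.sqrt ((1 + 2 * As + Zs ^ 2) * η ^ 2 - 2 * (As + Zs ^ 2) * η + Zs ^ 2))
    (η : ℝ) (hη : η ∈ Set.Ioo (0 : ℝ) 1) :
    (2 / g η) * (-(k : ℝ) * η * (1 - η) + lam * (1 - η) ^ 2)
      + (2 * η ^ 2 / (g η) ^ 2) * γ * (1 - η) > 0 :=
  rwn_lower_barrier_neg_k_general γ Zs As lam k hγ hZs hAs hlam hk g hg η hη
end

section
/- Let Z_* > 0, δ := 1.01, ν := 3, Λ := 0.000383, and suppose A_* ∈ [0, Z_*/10), γ ∈ (−1/(νδ), 0) = (−1/3.03, 0), λ ∈ [(3/2)Z_*, Λ], and let k ≥ 1 be an integer. Set a_k := λ/(k + λ − δγ) and b_k := λ/(k + λ + δγ) (so 0 < a_k < b_k < 1). Then for every η ∈ [a_k, b_k] and every Ω ∈ ℝ: (2η^2/g(η))·cos Ω + (2/g(η))·( kη(1−η) − λ(1−η)^2 )·sin Ω + (2η^2/g(η)^2)·γ(1−η) + (π/(b_k − a_k))·η(1−η)^2 > 0. (This is the slanted-barrier lemma: at energy ε = 0 the slope field of the compactified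 Prüfer system exceeds the slope −π/(b_k − a_k) of the line segment joining (a_k, −π/2) to (b_k, −3π/2).) -/
/-!
Write `P := kη(1-η) - λ(1-η)^2 = (1-η)((k+λ)η - λ)`. On the barrier interval `[a_k, b_k]`
one has `|(k+λ)η - λ| ≤ δ|γ|η < η/3`, and `b_k ≤ 2a_k`, so that `b_k - a_k ≤ η`; moreover `η`
is of order `λ`, hence tiny. Since `A_* < Z_*/10`, `g(η) ≥ (9/10)η`, so the `cos Ω` and `sin Ω`
terms and the Coulomb term are bounded in absolute value by `O(η)`, `20/27` and `200/243`,
while the drift term `(π/(b_k - a_k))η(1-η)^2` is at least `π(1-η)^2 ≈ π`.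
-/

open Real Set

theorem neg_abs_add_abs_le_mul_cos_add_mul_sin (a b Ω : ℝ) :
    -(|a| + |b|) ≤ a * cos Ω + b * sin Ω := by
  have hcos : |a * cos Ω| ≤ |a| := by
    rw [abs_mul]; exact mul_le_of_le_one_right (abs_nonneg a) (abs_cos_le_one Ω)
  have hsin : |b * sin Ω| ≤ |b| := by
    rw [abs_mul]; exact mul_le_of_le_one_right (abs_nonneg b) (abs_sin_le_one Ω)
  linarith [neg_abs_le (a * cos Ω), neg_abs_le (b * sin Ω)]

theorem mul_le_sqrt_of_le_div_ten {A Z η : ℝ} (hA : A ≤ Z / 10) (hη₀ : 0 ≤ η) (hη₁ : η ≤ 1) :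
    9 / 10 * η ≤ √((1 + 2 * A + Z ^ 2) * η ^ 2 - 2 * (A + Z ^ 2) * η + Z ^ 2) := by
  apply Real.le_sqrt_of_sq_le
  -- the radicand is `η² - 2Aη(1-η) + Z²(1-η)² ≥ η² - (Z/5)η(1-η) + Z²(1-η)²`
  nlinarith [sq_nonneg (Z * (1 - η) - η / 10),
    mul_le_mul_of_nonneg_right hA (mul_nonneg hη₀ (sub_nonneg.mpr hη₁))]

section BarrierInterval

variable {k lam c η : ℝ}

theorem abs_sub_le_of_mem_barrier (hk : 0 < k + lam + c) (hc : c ≤ 0)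
    (hη : η ∈ Icc (lam / (k + lam - c)) (lam / (k + lam + c))) :
    |(k + lam) * η - lam| ≤ -c * η := by
  have hleft : lam ≤ η * (k + lam - c) := (div_le_iff₀ (by linarith)).mp hη.1
  have hright : η * (k + lam + c) ≤ lam := (le_div_iff₀ hk).mp hη.2
  rw [abs_le]
  constructor <;> linarith

theorem le_of_mem_barrier (hk : 1 ≤ k) (hlam : 0 ≤ lam) (hc : -1 / 3 < c)
    (hη : η ≤ lam / (k + lam + c)) : η ≤ 3 / 2 * lam := by
  calc η ≤ lam / (k + lam + c) := hη
    _ ≤ lam / (2 / 3) := div_le_div_of_nonneg_left hlam (by norm_num) (by linarith)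
    _ = 3 / 2 * lam := by ring

theorem barrier_width_pos (hk : 1 ≤ k) (hlam : 0 < lam) (hc₀ : -1 / 3 < c) (hc₁ : c < 0) :
    0 < lam / (k + lam + c) - lam / (k + lam - c) := by
  have : lam / (k + lam - c) < lam / (k + lam + c) :=
    div_lt_div_of_pos_left hlam (by linarith) (by linarith)
  linarith

theorem barrier_width_le_left (hk : 1 ≤ k) (hlam : 0 ≤ lam) (hc₀ : -1 / 3 < c) (hc₁ : c < 0) :
    lam / (k + lam + c) - lam / (k + lam - c) ≤ lam / (k + lam - c) := by
  have hdouble : lam / (k + lam + c) ≤ 2 * lam / (k + lam - c) := by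
    rw [div_le_div_iff₀ (by linarith) (by linarith)]
    nlinarith
  linarith [mul_div_assoc 2 lam (k + lam - c)]

end BarrierInterval

theorem slope_field_add_drift_pos {η g P γ w Ω : ℝ} (hη₀ : 0 < η) (hη₁ : η ≤ 1 / 1000)
    (hg : 9 / 10 * η ≤ g) (hP : |P| ≤ η / 3) (hγ : -1 / 3 < γ) (hw₀ : 0 < w) (hw : w ≤ η) :
    (2 * η ^ 2 / g) * cos Ω + (2 / g) * P * sin Ω + (2 * η ^ 2 / g ^ 2) * γ * (1 - η)
      + (π / w) * η * (1 - η) ^ 2 > 0 := by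
  have hg₀ : 0 < g := by linarith
  set r := η / g with hr
  have hr₀ : 0 < r := div_pos hη₀ hg₀
  have hr₁ : r ≤ 10 / 9 := by rw [div_le_iff₀ hg₀]; linarith
  have hcos : |2 * η ^ 2 / g| ≤ 1 / 100 := by
    rw [show 2 * η ^ 2 / g = 2 * η * r by rw [hr]; ring, abs_of_pos (by positivity)]
    nlinarith
  have hsin : |2 / g * P| ≤ 20 / 27 := by
    rw [abs_mul, abs_of_pos (by positivity : 0 < 2 / g)]
    calc 2 / g * |P| ≤ 2 / g * (η / 3) := by gcongr
      _ = 2 / 3 * r := by rw [hr]; ring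
      _ ≤ 20 / 27 := by linarith
  have hcoulomb : -(200 / 243) ≤ (2 * η ^ 2 / g ^ 2) * γ * (1 - η) := by
    have hγη : -(1 / 3) ≤ γ * (1 - η) := by
      rcases le_or_gt 0 γ with h | h <;> nlinarith
    rw [show 2 * η ^ 2 / g ^ 2 = 2 * r ^ 2 by rw [hr]; ring]
    nlinarith [mul_le_mul_of_nonneg_left hγη (by positivity : (0 : ℝ) ≤ 2 * r ^ 2)]
  have hdrift : 2.99 ≤ (π / w) * η * (1 - η) ^ 2 := by
    have hπ : π ≤ π / w * η := by
      rw [div_mul_eq_mul_div, le_div_iff₀ hw₀]; exact mul_le_mul_of_nonneg_left hw pi_pos.le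
    have hsq : 0.998 ≤ (1 - η) ^ 2 := by nlinarith
    nlinarith [pi_gt_three, mul_le_mul hπ hsq (by norm_num) (by positivity)]
  linarith [neg_abs_add_abs_le_mul_cos_add_mul_sin (2 * η ^ 2 / g) (2 / g * P) Ω]

/-- Slanted-barrier lemma: with `δ = 1.01`, `ν = 3`, `Λ = 0.000383`,
at energy `ε = 0` the slope field of the compactified Prüfer system exceeds the slope
`−π/(b_k − a_k)` of the segment joining `(a_k, −π/2)` to `(b_k, −3π/2)`. -/
theorem rwn_slanted_barrier (Zs As γ lam : ℝ) (k : ℤ)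
    (hZ : 0 < Zs) (hAs : As ∈ Set.Ico (0 : ℝ) (Zs / 10))
    (hγ : γ ∈ Set.Ioo (-1 / 3.03 : ℝ) 0)
    (hlam : lam ∈ Set.Icc ((3 / 2) * Zs) (0.000383 : ℝ))
    (hk : 1 ≤ k)
    (g : ℝ → ℝ)
    (hg : ∀ η, g η =
      Real.sqrt ((1 + 2 * As + Zs ^ 2) * η ^ 2 - 2 * (As + Zs ^ 2) * η + Zs ^ 2))
    (ak bk : ℝ)
    (hak : ak = lam / ((k : ℝ) + lam - 1.01 * γ))
    (hbk : bk = lam / ((k : ℝ) + lam + 1.01 * γ))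
    (η Ω : ℝ) (hη : η ∈ Set.Icc ak bk) :
    (2 * η ^ 2 / g η) * Real.cos Ω
      + (2 / g η) * ((k : ℝ) * η * (1 - η) - lam * (1 - η) ^ 2) * Real.sin Ω
      + (2 * η ^ 2 / (g η) ^ 2) * γ * (1 - η)
      + (Real.pi / (bk - ak)) * η * (1 - η) ^ 2 > 0 := by
  subst hak hbk
  have hk' : (1 : ℝ) ≤ k := by exact_mod_cast hk
  have hlam₀ : 0 < lam := by linarith [hlam.1]
  have hc₀ : -1 / 3 < 1.01 * γ := by linarith [hγ.1]
  have hc₁ : 1.01 * γ < 0 := by linarith [hγ.2]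
  have hη₀ : 0 < η := lt_of_lt_of_le (div_pos hlam₀ (by linarith)) hη.1
  have hη₁ : η ≤ 1 / 1000 := by linarith [le_of_mem_barrier hk' hlam₀.le hc₀ hη.2, hlam.2]
  have hP : |(k : ℝ) * η * (1 - η) - lam * (1 - η) ^ 2| ≤ η / 3 := by
    rw [show (k : ℝ) * η * (1 - η) - lam * (1 - η) ^ 2 = (1 - η) * ((k + lam) * η - lam) by ring,
      abs_mul, abs_of_pos (by linarith : (0 : ℝ) < 1 - η)]
    have := abs_sub_le_of_mem_barrier (by linarith) hc₁.le hη
    nlinarith [abs_nonneg ((k + lam) * η - lam)]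
  refine slope_field_add_drift_pos hη₀ hη₁ ?_ hP (by linarith [hγ.1])
    (barrier_width_pos hk' hlam₀ hc₀ hc₁) ?_
  · rw [hg η]; exact mul_le_sqrt_of_le_div_ten hAs.2.le hη₀.le (by linarith)
  · linarith [barrier_width_le_left hk' hlam₀.le hc₀ hc₁, hη.1]
end

section
/- Let α ∈ [1/138, 1/137], let 𝒢 ∈ (0, 10^{−42}], let Z_* ∈ [ (α/2)·√𝒢, √𝒢 ), set γ := −Z_*/√𝒢, let A_* ∈ [0, Z_*/10), and let ε ∈ [0, 1). Then for every η ∈ (0, 0.003): 2η^2/g(η) + (2η^2/g(η)^2)·(γ(1−η) − εη) < 0. (This is the first barrier claim in the proof that the winding number satisfies w_ε ≥ 1 for k ≥ 1: the compactified Prüfer vector field points strictly downward along the horizontal line Ω = 0 for η ∈ (0, 0.003).) -/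
/-!
Writing `c := Z_*/√𝒢 = -γ`, the radicand of `g` equals `η² + Z_*²(1-η)² - 2A_*η(1-η)`.
Since `A_* < Z_*`, AM–GM keeps it positive, and since `A_* ≥ 0` it is at most
`(η + Z_*(1-η))²`. The quantity factors as `(2η²/g²)·(g + γ(1-η) - εη)`, and the second
factor is negative because `g ≤ η + Z_*(1-η)` while `c ≥ α/2 ≥ 1/276` and `Z_* < 10⁻²¹`
make `(c - Z_*)(1-η)` exceed `0.003 > η`.
-/

lemma prufer_radicand_eq (A Z η : ℝ) :
    (1 + 2 * A + Z ^ 2) * η ^ 2 - 2 * (A + Z ^ 2) * η + Z ^ 2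
      = η ^ 2 + Z ^ 2 * (1 - η) ^ 2 - 2 * A * (η * (1 - η)) := by
  ring

lemma prufer_radicand_pos {A Z η : ℝ} (hAZ : A < Z) (hη0 : 0 < η) (hη1 : η < 1) :
    0 < (1 + 2 * A + Z ^ 2) * η ^ 2 - 2 * (A + Z ^ 2) * η + Z ^ 2 := by
  have hamgm : 2 * Z * (η * (1 - η)) ≤ η ^ 2 + Z ^ 2 * (1 - η) ^ 2 := by
    nlinarith [sq_nonneg (η - Z * (1 - η))]
  have hpos : 0 < (Z - A) * (η * (1 - η)) := by
    have : 0 < 1 - η := by linarith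
    positivity
  rw [prufer_radicand_eq]
  linarith

lemma sqrt_prufer_radicand_le {A Z η : ℝ} (hA : 0 ≤ A) (hZ : 0 ≤ Z) (hη0 : 0 ≤ η)
    (hη1 : η ≤ 1) :
    √((1 + 2 * A + Z ^ 2) * η ^ 2 - 2 * (A + Z ^ 2) * η + Z ^ 2) ≤ η + Z * (1 - η) := by
  have h1η : 0 ≤ 1 - η := by linarith
  rw [Real.sqrt_le_left (by positivity), prufer_radicand_eq]
  nlinarith [mul_nonneg hA (mul_nonneg hη0 h1η), mul_nonneg hZ (mul_nonneg hη0 h1η)]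

lemma div_add_div_sq_mul_neg {a g x : ℝ} (ha : 0 < a) (hg : 0 < g) (h : g + x < 0) :
    a / g + a / g ^ 2 * x < 0 := by
  have hfactor : a / g + a / g ^ 2 * x = a / g ^ 2 * (g + x) := by
    field_simp
  rw [hfactor]
  exact mul_neg_of_pos_of_neg (by positivity) h

/-- For `ε ∈ [0,1)` the compactified Prüfer vector field points strictly
downward along the horizontal line `Ω = 0` for `η ∈ (0, 0.003)`; first barrier claim
in the proof that `w_ε ≥ 1` for `k ≥ 1`. -/
theorem rwn_downward_at_zero_line (α G Zs γ As ε : ℝ)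
    (hα : α ∈ Set.Icc (1 / 138 : ℝ) (1 / 137))
    (hG : G ∈ Set.Ioc (0 : ℝ) (1e-42 : ℝ))
    (hZs : Zs ∈ Set.Ico ((α / 2) * Real.sqrt G) (Real.sqrt G))
    (hγ : γ = -Zs / Real.sqrt G)
    (hAs : As ∈ Set.Ico (0 : ℝ) (Zs / 10))
    (hε : ε ∈ Set.Ico (0 : ℝ) 1)
    (g : ℝ → ℝ)
    (hg : ∀ η, g η =
      Real.sqrt ((1 + 2 * As + Zs ^ 2) * η ^ 2 - 2 * (As + Zs ^ 2) * η + Zs ^ 2))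
    (η : ℝ) (hη : η ∈ Set.Ioo (0 : ℝ) (0.003 : ℝ)) :
    2 * η ^ 2 / g η + (2 * η ^ 2 / (g η) ^ 2) * (γ * (1 - η) - ε * η) < 0 := by
  obtain ⟨hη0, hη1⟩ := hη
  have hsG : 0 < √G := Real.sqrt_pos.mpr hG.1
  have hc : 1 / 276 ≤ Zs / √G := by
    rw [le_div_iff₀ hsG]
    nlinarith [hα.1, hZs.1]
  have hZs0 : 0 < Zs := by
    have hα0 : 0 < α := by linarith [hα.1]
    exact lt_of_lt_of_le (by positivity) hZs.1
  have hZs_small : Zs < 1e-21 := by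
    have h : √(1e-42 : ℝ) = 1e-21 := by
      rw [show (1e-42 : ℝ) = 1e-21 ^ 2 by norm_num, Real.sqrt_sq (by norm_num)]
    linarith [hZs.2, h ▸ Real.sqrt_le_sqrt hG.2]
  have hgpos : 0 < g η :=
    hg η ▸ Real.sqrt_pos.mpr (prufer_radicand_pos (by linarith [hAs.2]) hη0 (by linarith))
  have hgle : g η ≤ η + Zs * (1 - η) :=
    hg η ▸ sqrt_prufer_radicand_le hAs.1 hZs0.le hη0.le (by linarith)
  have hγc : γ = -(Zs / √G) := by rw [hγ, neg_div]
  have hmargin : (1 / 276 - 1e-21) * (1 - 0.003) ≤ (Zs / √G - Zs) * (1 - η) :=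
    mul_le_mul (by linarith) (by linarith) (by norm_num) (by linarith)
  refine div_add_div_sq_mul_neg (by positivity) hgpos ?_
  rw [hγc]
  linarith [mul_nonneg hε.1 hη0.le]
end

section
/- Let α ∈ [1/138, 1/137], let 𝒢 ∈ (0, 10^{−42}], let Z_* ∈ [ (α/2)·√𝒢, √𝒢 ), set γ := −Z_*/√𝒢, let A_* ∈ [0, Z_*/10), let λ ∈ [(3/2)Z_*, α/(2π)], and let k ≥ 1 be an integer. Set η₀ := 0.0003 and Ω₀(η) := −(π/(1−η₀))·(η − η₀). Then for every η ∈ [η₀, 1): (2η^2/g(η))·cos Ω₀(η) + (2/g(η))·( kη(1−η) − λ(1−η)^2 )·sin Ω₀(η) + (2η^2/g(η)^2)·γ(1−η) + (π/(1−η₀))·η(1−η)^2 < 0. (This is the slanted upper-barrier claim in the proof that the winding number satisfies w_ε ≥ 1 for k ≥ 1: along the line segment joining (η₀, 0) to (1, −π), the slope field of the compactified Prüfer system at energy ε = 0 is strictly less than the slope of the segment.) -/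
/-!
Because `Z_* < √𝒢 ≤ 10⁻²¹`, the radicand equals `η² - 2A_*η(1-η) + Z_*²(1-η)²`, so
`|g η - η| ≤ Z_*` and the field differs from its `Z_* = 0` limit by at most `3Z_*`, while
`k ≥ 1`, `γ ≤ -α/2 ≤ -1/276` and `λ ≤ α/(2π)` enter monotonically. Writing
`η = η₀ + (1 - η₀)t`, the limit is an explicit trigonometric expression in `t ∈ [0, 1)`;
Taylor bounds for `sin πt` and `cos πt` at `t = 0` (for `t ≤ 1/2`) and at `t = 1`
(for `t > 1/2`) reduce its negativity to polynomial inequalities in `t`.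
-/

open Real

lemma nuclear_charge_bounds {α G Z : ℝ} (hα : 1 / 138 ≤ α) (hG : G ∈ Set.Ioc 0 1e-42)
    (hZ : Z ∈ Set.Ico (α / 2 * √G) √G) : 0 < Z ∧ Z < 1e-21 ∧ -Z / √G ≤ -1 / 276 := by
  have hsG : 0 < √G := sqrt_pos.2 hG.1
  have hsG_le : √G ≤ 1e-21 := (sqrt_le_left (by norm_num)).2 (hG.2.trans (by norm_num))
  have hratio : α / 2 ≤ Z / √G := by rw [le_div_iff₀ hsG]; exact hZ.1
  refine ⟨(mul_pos (by linarith) hsG).trans_le hZ.1, hZ.2.trans_le hsG_le, ?_⟩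
  rw [neg_div]
  linarith

lemma sub_le_sqrt_radicand {A Z η : ℝ} (hAZ : A ≤ Z) (hZ : 0 ≤ Z) (hZη : Z ≤ η) (hη : η ≤ 1) :
    η - Z ≤ √((1 + 2 * A + Z ^ 2) * η ^ 2 - 2 * (A + Z ^ 2) * η + Z ^ 2) := by
  apply le_sqrt_of_sq_le
  nlinarith only [mul_nonneg (mul_nonneg (sub_nonneg.2 hAZ) (hZ.trans hZη)) (sub_nonneg.2 hη),
    mul_nonneg (mul_nonneg hZ (hZ.trans hZη)) (sub_nonneg.2 hZη), sq_nonneg (Z * η)]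

lemma sqrt_radicand_le {A Z η : ℝ} (hA : 0 ≤ A) (hZ : 0 ≤ Z) (hη₀ : 0 ≤ η) (hη : η ≤ 1) :
    √((1 + 2 * A + Z ^ 2) * η ^ 2 - 2 * (A + Z ^ 2) * η + Z ^ 2) ≤ η + Z := by
  rw [sqrt_le_left (by positivity)]
  nlinarith only [mul_nonneg (mul_nonneg hA hη₀) (sub_nonneg.2 hη), mul_nonneg hZ hη₀,
    mul_nonneg (mul_nonneg (sq_nonneg Z) hη₀) (by linarith : (0:ℝ) ≤ 2 - η)]

lemma prufer_slope_le_reduced {Z g η c s k lam γ : ℝ} (hZ : 0 ≤ Z) (hη : 0 < η)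
    (hZη : 2001 * Z ≤ η) (hη1 : η ≤ 1) (hg_lo : η - Z ≤ g) (hg_hi : g ≤ η + Z) (hc : |c| ≤ 1)
    (hs : 0 ≤ s) (hk : 1 ≤ k) (hlam₀ : 0 ≤ lam) (hlam₁ : lam ≤ 0.0011618) (hγ : γ ≤ -1 / 276) :
    2 * η ^ 2 / g * c + 2 / g * (k * η * (1 - η) - lam * (1 - η) ^ 2) * (-s)
      + 2 * η ^ 2 / g ^ 2 * γ * (1 - η)
      ≤ 2 * η * c + 3 * Z - 1.99 * (1 - η) * s + 0.0023248 * (1 - η) ^ 2 * s / η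
        - 0.99 / 138 * (1 - η) := by
  have hg : 0 < g := by linarith
  have h1η : 0 ≤ 1 - η := by linarith
  have hcos_coeff : |2 * η ^ 2 / g - 2 * η| ≤ 3 * Z := by
    rw [show 2 * η ^ 2 / g - 2 * η = 2 * η * (η - g) / g by field_simp, abs_div, abs_mul,
      abs_of_pos hg, abs_of_pos (by positivity : 0 < 2 * η), div_le_iff₀ hg]
    have : |η - g| ≤ Z := abs_sub_le_iff.2 ⟨by linarith, by linarith⟩
    nlinarith
  have hk_coeff : 1.99 ≤ 2 * η / g := by rw [le_div_iff₀ hg]; linarith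
  have hlam_coeff : 2 / g ≤ 2.001 / η := by rw [div_le_div_iff₀ hg hη]; linarith
  have hγ_coeff : 1.98 ≤ 2 * η ^ 2 / g ^ 2 := by rw [le_div_iff₀ (by positivity)]; nlinarith
  have hcos_term : 2 * η ^ 2 / g * c ≤ 2 * η * c + 3 * Z := by
    have := (le_abs_self _).trans ((abs_mul (2 * η ^ 2 / g - 2 * η) c).trans_le
      (mul_le_mul hcos_coeff hc (abs_nonneg c) (by positivity)))
    linarith [show (2 * η ^ 2 / g - 2 * η) * c = 2 * η ^ 2 / g * c - 2 * η * c by ring]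
  have hk_term : 1.99 * (1 - η) * s ≤ 2 / g * (k * η * (1 - η)) * s := by
    rw [show 2 / g * (k * η * (1 - η)) * s = k * (2 * η / g) * ((1 - η) * s) by ring]
    nlinarith [mul_nonneg h1η hs, mul_le_mul hk hk_coeff (by norm_num) (by linarith)]
  have hlam_term : 2 / g * (lam * (1 - η) ^ 2) * s ≤ 0.0023248 * (1 - η) ^ 2 * s / η := by
    calc 2 / g * (lam * (1 - η) ^ 2) * s ≤ 2.001 / η * (0.0011618 * (1 - η) ^ 2) * s := by gcongr
      _ = 2.001 * 0.0011618 * ((1 - η) ^ 2 * s / η) := by ring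
      _ ≤ 0.0023248 * ((1 - η) ^ 2 * s / η) := by gcongr; norm_num
      _ = 0.0023248 * (1 - η) ^ 2 * s / η := by ring
  have hγ_term : 2 * η ^ 2 / g ^ 2 * γ * (1 - η) ≤ -(0.99 / 138) * (1 - η) := by
    nlinarith [mul_nonneg (sub_nonneg.2 hγ_coeff) h1η]
  linarith

lemma pi_cube_lt : π ^ 3 < 31.0063 :=
  (pow_lt_pow_left₀ pi_lt_d6 pi_pos.le three_ne_zero).trans (by norm_num)

lemma sin_pi_mul_nonneg {t : ℝ} (ht₀ : 0 ≤ t) (ht₁ : t ≤ 1) : 0 ≤ sin (π * t) :=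
  sin_nonneg_of_nonneg_of_le_pi (by positivity) (by nlinarith [pi_pos])

lemma sin_pi_mul_le {t : ℝ} (ht : 0 ≤ t) : sin (π * t) ≤ 3.141593 * t :=
  (sin_le (mul_nonneg pi_pos.le ht)).trans (mul_le_mul_of_nonneg_right pi_lt_d6.le ht)

lemma sub_cube_le_sin_pi_mul {t : ℝ} (ht : 0 ≤ t) :
    3.141592 * t - 5.1678 * t ^ 3 ≤ sin (π * t) := by
  have h := sin_ge_sub_cube (mul_nonneg pi_pos.le ht)
  nlinarith [pi_gt_d6, pi_cube_lt, pow_nonneg ht 3]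

lemma cos_pi_mul_le {t : ℝ} (ht₀ : 0 ≤ t) (ht : t ≤ 1) :
    cos (π * t) ≤ 1 - 2 * (1.570796 * t - 0.646 * t ^ 3) ^ 2 := by
  have hsin := sin_ge_sub_cube (by positivity : 0 ≤ π * t / 2)
  have hlow : 1.570796 * t - 0.646 * t ^ 3 ≤ π * t / 2 - (π * t / 2) ^ 3 / 6 := by
    nlinarith [pi_gt_d6, pi_cube_lt, pow_nonneg ht₀ 3]
  have hlow₀ : 0 ≤ 1.570796 * t - 0.646 * t ^ 3 := by nlinarith [mul_nonneg ht₀ ht₀]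
  rw [show π * t = 2 * (π * t / 2) by ring, cos_two_mul_eq_one_sub]
  linarith [pow_le_pow_left₀ hlow₀ (hlow.trans hsin) 2]

lemma cos_pi_mul_le_sq_sub_one (t : ℝ) : cos (π * t) ≤ 4.93481 * (1 - t) ^ 2 - 1 := by
  have h := one_sub_sq_div_two_le_cos (x := π * (1 - t))
  rw [show π * (1 - t) = π - π * t by ring, cos_pi_sub] at h
  have hπ2 : π ^ 2 < 9.86962 := by nlinarith [pi_lt_d6, pi_pos]
  nlinarith [sq_nonneg (1 - t), sq_nonneg (π * (1 - t))]

lemma reduced_slope_mul_neg_of_le_half {t η c s : ℝ} (ht₀ : 0 ≤ t) (ht : t ≤ 1 / 2)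
    (hη : η = 0.0003 + 0.9997 * t) (hs : 3.141592 * t - 5.1678 * t ^ 3 ≤ s) (hc₁ : c ≤ 1)
    (hc : c ≤ 1 - 2 * (1.570796 * t - 0.646 * t ^ 3) ^ 2) :
    (2 * η * c + 3e-21 - 1.99 * (1 - η) * s - 0.99 / 138 * (1 - η)
      + 3.142536 * η * (1 - η) ^ 2) * η + 0.0073036 * t * (1 - η) ^ 2 < 0 := by
  subst hη
  rcases le_or_gt t 0.02 with ht' | ht'
  · have hcη : 2 * (0.0003 + 0.9997 * t) * c ≤ 2 * (0.0003 + 0.9997 * t) := by nlinarith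
    nlinarith only [hs, hcη, ht₀, ht', sq_nonneg (t - 0.001), sq_nonneg t,
      mul_nonneg ht₀ ht₀, mul_nonneg (mul_nonneg ht₀ ht₀) ht₀, sq_nonneg (t - 0.02),
      mul_nonneg (mul_nonneg ht₀ ht₀) (by linarith only [ht'] : (0:ℝ) ≤ 0.02 - t)]
  · have ha : (0:ℝ) ≤ t - 0.02 := by linarith
    have hb : (0:ℝ) ≤ 0.5 - t := by linarith
    nlinarith only [hs, hc, ht₀, ht, ht', sq_nonneg (t - 0.2), sq_nonneg (t - 0.02),
      sq_nonneg (t - 0.5), mul_nonneg ha hb, mul_nonneg (mul_nonneg ha hb) hb,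
      mul_nonneg (mul_nonneg ha ha) hb, sq_nonneg (t * t - 0.1)]

lemma reduced_slope_neg_of_half_lt {t η c s : ℝ} (ht : 1 / 2 < t) (ht₁ : t < 1)
    (hη : η = 0.0003 + 0.9997 * t) (hs : 3.141592 * (1 - t) - 5.1678 * (1 - t) ^ 3 ≤ s)
    (hc : c ≤ 4.93481 * (1 - t) ^ 2 - 1) :
    2 * η * c + 3e-21 - 1.99 * (1 - η) * s + 0.00467 * (1 - η) ^ 2 - 0.99 / 138 * (1 - η)
      + 3.142536 * η * (1 - η) ^ 2 < 0 := by
  subst hη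
  have ha : (0:ℝ) ≤ t - 0.5 := by linarith
  have hb : (0:ℝ) ≤ 1 - t := by linarith
  nlinarith only [hs, hc, ht, ht₁, sq_nonneg (t - 0.5), sq_nonneg (1 - t), mul_nonneg ha hb,
    mul_nonneg (mul_nonneg ha hb) hb, sq_nonneg ((1 - t) * (1 - t) - 0.1)]

lemma reduced_slope_neg {t η : ℝ} (ht₀ : 0 ≤ t) (ht₁ : t < 1) (hη : η = 0.0003 + 0.9997 * t) :
    2 * η * cos (π * t) + 3e-21 - 1.99 * (1 - η) * sin (π * t)
      + 0.0023248 * (1 - η) ^ 2 * sin (π * t) / η - 0.99 / 138 * (1 - η)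
      + 3.142536 * η * (1 - η) ^ 2 < 0 := by
  have hη₀ : 0 < η := by linarith
  have hs₀ := sin_pi_mul_nonneg ht₀ ht₁.le
  rcases le_or_gt t (1 / 2) with ht | ht
  · -- `sin πt ≤ πt` cancels the `1/η` in the λ-term near `t = 0`, where `η ≈ t`.
    have hlam_term : 0.0023248 * (1 - η) ^ 2 * sin (π * t) / η
        ≤ 0.0073036 * t * (1 - η) ^ 2 / η := by
      rw [div_le_div_iff_of_pos_right hη₀]
      nlinarith [mul_nonneg (sq_nonneg (1 - η)) (sub_nonneg.2 (sin_pi_mul_le ht₀))]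
    have hmul := reduced_slope_mul_neg_of_le_half ht₀ ht hη (sub_cube_le_sin_pi_mul ht₀)
      (cos_le_one _) (cos_pi_mul_le ht₀ (by linarith))
    have hdiv := div_neg_of_neg_of_pos hmul hη₀
    rw [add_div, mul_div_cancel_right₀ _ hη₀.ne'] at hdiv
    linarith
  · have hlam_term : 0.0023248 * (1 - η) ^ 2 * sin (π * t) / η ≤ 0.00467 * (1 - η) ^ 2 := by
      rw [div_le_iff₀ hη₀]
      nlinarith [sin_le_one (π * t), mul_nonneg (sq_nonneg (1 - η)) hs₀]
    have hs := sub_cube_le_sin_pi_mul (t := 1 - t) (by linarith)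
    rw [show π * (1 - t) = π - π * t by ring, sin_pi_sub] at hs
    linarith [reduced_slope_neg_of_half_lt ht ht₁ hη hs (cos_pi_mul_le_sq_sub_one t)]

/-- Slanted upper-barrier claim: along the segment joining `(η₀, 0)` to
`(1, −π)` with `η₀ = 0.0003`, the slope field of the compactified Prüfer system at
energy `ε = 0` is strictly less than the slope of the segment. -/
theorem rwn_slanted_upper_barrier (α G Zs γ As lam : ℝ) (k : ℤ)
    (hα : α ∈ Set.Icc (1 / 138 : ℝ) (1 / 137))
    (hG : G ∈ Set.Ioc (0 : ℝ) (1e-42 : ℝ))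
    (hZs : Zs ∈ Set.Ico ((α / 2) * Real.sqrt G) (Real.sqrt G))
    (hγ : γ = -Zs / Real.sqrt G)
    (hAs : As ∈ Set.Ico (0 : ℝ) (Zs / 10))
    (hlam : lam ∈ Set.Icc ((3 / 2) * Zs) (α / (2 * Real.pi)))
    (hk : 1 ≤ k)
    (g : ℝ → ℝ)
    (hg : ∀ η, g η =
      Real.sqrt ((1 + 2 * As + Zs ^ 2) * η ^ 2 - 2 * (As + Zs ^ 2) * η + Zs ^ 2))
    (η₀ : ℝ) (hη₀ : η₀ = 0.0003)
    (Ω₀ : ℝ → ℝ) (hΩ₀ : ∀ η, Ω₀ η = -(Real.pi / (1 - η₀)) * (η - η₀))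
    (η : ℝ) (hη : η ∈ Set.Ico η₀ 1) :
    (2 * η ^ 2 / g η) * Real.cos (Ω₀ η)
      + (2 / g η) * ((k : ℝ) * η * (1 - η) - lam * (1 - η) ^ 2) * Real.sin (Ω₀ η)
      + (2 * η ^ 2 / (g η) ^ 2) * γ * (1 - η)
      + (Real.pi / (1 - η₀)) * η * (1 - η) ^ 2 < 0 := by
  obtain ⟨hZ₀, hZ₁, hγ_le⟩ := nuclear_charge_bounds hα.1 hG hZs
  have hlam₁ : lam ≤ 0.0011618 :=
    hlam.2.trans (by rw [div_le_iff₀ (by positivity)]; nlinarith [pi_gt_d6, hα.2])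
  subst hη₀ hγ
  obtain ⟨hη_lo, hη_hi⟩ := hη
  set t := (η - 0.0003) / (1 - 0.0003) with ht
  have hηt : η = 0.0003 + 0.9997 * t := by rw [ht]; field_simp; ring
  have ht₀ : 0 ≤ t := div_nonneg (by linarith) (by norm_num)
  have ht₁ : t < 1 := by rw [ht, div_lt_one (by norm_num)]; linarith
  rw [hΩ₀, show -(π / (1 - 0.0003)) * (η - 0.0003) = -(π * t) by ring, cos_neg, sin_neg]
  have hg_lo : η - Zs ≤ g η := by
    rw [hg]; exact sub_le_sqrt_radicand (by linarith [hAs.2]) hZ₀.le (by linarith) hη_hi.le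
  have hg_hi : g η ≤ η + Zs := by
    rw [hg]; exact sqrt_radicand_le hAs.1 hZ₀.le (by linarith) hη_hi.le
  have hslope := prufer_slope_le_reduced (c := cos (π * t)) (k := (k : ℝ)) hZ₀.le
    (by linarith) (by linarith) hη_hi.le hg_lo hg_hi (abs_cos_le_one _)
    (sin_pi_mul_nonneg ht₀ ht₁.le) (by exact_mod_cast hk) (by linarith [hlam.1]) hlam₁ hγ_le
  have hπ_term : π / (1 - 0.0003) * η * (1 - η) ^ 2 ≤ 3.142536 * η * (1 - η) ^ 2 := by
    gcongr
    rw [div_le_iff₀ (by norm_num)]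
    linarith [pi_lt_d6]
  linarith [reduced_slope_neg ht₀ ht₁ hηt]
end

section
/- Let Z_* > 0, A_* ∈ [0, Z_*), γ, λ, ε ∈ ℝ, and let k be a nonzero integer. Let f(r) := sqrt(1 − 2A_*/r + Z_*^2/r^2) for r > 0. Suppose R, Ω : (0, ∞) → ℝ are differentiable and satisfy R'(r) = R(r)·[ sin Ω(r)/f(r) + (λ/r^2 − k/r)·cos Ω(r)/f(r) ] and Ω'(r) = (2/f(r))·cos Ω(r) + (2/f(r))·(k/r − λ/r^2)·sin Ω(r) + (2/f(r)^2)·(γ/r − ε). Then u(r) := R(r)·cos(Ω(r)/2) and v(r) := R(r)·sin(Ω(r)/2) satisfy the radial Dirac eigenvalue system: u'(r) + (1/f(r))·(k/r − λ/r^2)·u(r) − (1/f(r)^2)·(f(r) − γ/r + ε)·v(r) = 0 and v'(r) − (1/f(r))·(k/r − λ/r^2)·v(r) − (1/f(r)^2)·(f(r) + γ/r − ε)·u(r) = 0 for all r > 0. -/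
/-! Writing `u + i v = R e^{iΩ/2}` turns the amplitude and angle equations into
`(u + i v)' = (R'/R + i Ω'/2) (u + i v)`. Expanding `sin Ω` and `cos Ω` in half angles
and using `cos² (Ω/2) + sin² (Ω/2) = 1`, the right-hand side is exactly the Dirac system. -/

open Real

theorem hasDerivAt_prufer {R Ω : ℝ → ℝ} {x a b : ℝ} (hR : HasDerivAt R (R x * a) x)
    (hΩ : HasDerivAt Ω b x) :
    HasDerivAt (fun y => R y * cos (Ω y / 2))
      (a * (R x * cos (Ω x / 2)) - b / 2 * (R x * sin (Ω x / 2))) x ∧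
    HasDerivAt (fun y => R y * sin (Ω y / 2))
      (a * (R x * sin (Ω x / 2)) + b / 2 * (R x * cos (Ω x / 2))) x := by
  have hθ := hΩ.div_const 2
  constructor
  · exact (hR.fun_mul hθ.cos).congr_deriv (by ring)
  · exact (hR.fun_mul hθ.sin).congr_deriv (by ring)

theorem rwn_prufer_transform_general (γ lam ε : ℝ) (k : ℤ)
    (f : ℝ → ℝ)
    (R Ω : ℝ → ℝ)
    (hR : ∀ r, 0 < r → HasDerivAt R
      (R r * (Real.sin (Ω r) / f r
        + (lam / r ^ 2 - (k : ℝ) / r) * Real.cos (Ω r) / f r)) r)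
    (hΩ : ∀ r, 0 < r → HasDerivAt Ω
      ((2 / f r) * Real.cos (Ω r)
        + (2 / f r) * ((k : ℝ) / r - lam / r ^ 2) * Real.sin (Ω r)
        + (2 / (f r) ^ 2) * (γ / r - ε)) r)
    (u v : ℝ → ℝ)
    (hu : ∀ r, u r = R r * Real.cos (Ω r / 2))
    (hv : ∀ r, v r = R r * Real.sin (Ω r / 2)) :
    ∀ r, 0 < r →
      HasDerivAt u
        (-(1 / f r) * ((k : ℝ) / r - lam / r ^ 2) * u r
          + (1 / (f r) ^ 2) * (f r - γ / r + ε) * v r) r ∧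
      HasDerivAt v
        ((1 / f r) * ((k : ℝ) / r - lam / r ^ 2) * v r
          + (1 / (f r) ^ 2) * (f r + γ / r - ε) * u r) r := by
  obtain rfl : u = fun r => R r * cos (Ω r / 2) := funext hu
  obtain rfl : v = fun r => R r * sin (Ω r / 2) := funext hv
  intro r hr
  obtain ⟨hu', hv'⟩ := hasDerivAt_prufer (hR r hr) (hΩ r hr)
  have hsin : sin (Ω r) = 2 * sin (Ω r / 2) * cos (Ω r / 2) := by
    rw [← sin_two_mul, mul_div_cancel₀ _ two_ne_zero]
  have hcos : cos (Ω r) = cos (Ω r / 2) ^ 2 - sin (Ω r / 2) ^ 2 := by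
    rw [← cos_two_mul', mul_div_cancel₀ _ two_ne_zero]
  have hpyth := sin_sq_add_cos_sq (Ω r / 2)
  -- valid also at `f r = 0`, where both sides are `0`
  have hf := div_self_mul_self' (f r)
  constructor
  · refine hu'.congr_deriv ?_
    rw [hsin, hcos]
    linear_combination ((f r)⁻¹ * R r * (sin (Ω r / 2)
        - ((k : ℝ) / r - lam / r ^ 2) * cos (Ω r / 2))) * hpyth
      - R r * sin (Ω r / 2) * hf
  · refine hv'.congr_deriv ?_
    rw [hsin, hcos]
    linear_combination ((f r)⁻¹ * R r * (cos (Ω r / 2)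
        + ((k : ℝ) / r - lam / r ^ 2) * sin (Ω r / 2))) * hpyth
      - R r * cos (Ω r / 2) * hf

/-- The Prüfer transform: if `R` and `Ω` solve the amplitude and angle
equations on `(0,∞)`, then `u = R cos(Ω/2)` and `v = R sin(Ω/2)` solve the radial Dirac
eigenvalue system for the reduced hamiltonian on the RWN spacetime. -/
theorem rwn_prufer_transform (Zs As γ lam ε : ℝ) (k : ℤ)
    (hZ : 0 < Zs) (hAs : As ∈ Set.Ico (0 : ℝ) Zs) (hk : k ≠ 0)
    (f : ℝ → ℝ) (hf : ∀ r, f r = Real.sqrt (1 - 2 * As / r + Zs ^ 2 / r ^ 2))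
    (R Ω : ℝ → ℝ)
    (hR : ∀ r, 0 < r → HasDerivAt R
      (R r * (Real.sin (Ω r) / f r
        + (lam / r ^ 2 - (k : ℝ) / r) * Real.cos (Ω r) / f r)) r)
    (hΩ : ∀ r, 0 < r → HasDerivAt Ω
      ((2 / f r) * Real.cos (Ω r)
        + (2 / f r) * ((k : ℝ) / r - lam / r ^ 2) * Real.sin (Ω r)
        + (2 / (f r) ^ 2) * (γ / r - ε)) r)
    (u v : ℝ → ℝ)
    (hu : ∀ r, u r = R r * Real.cos (Ω r / 2))
    (hv : ∀ r, v r = R r * Real.sin (Ω r / 2)) :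
    ∀ r, 0 < r →
      HasDerivAt u
        (-(1 / f r) * ((k : ℝ) / r - lam / r ^ 2) * u r
          + (1 / (f r) ^ 2) * (f r - γ / r + ε) * v r) r ∧
      HasDerivAt v
        ((1 / f r) * ((k : ℝ) / r - lam / r ^ 2) * v r
          + (1 / (f r) ^ 2) * (f r + γ / r - ε) * u r) r :=
  rwn_prufer_transform_general γ lam ε k f R Ω hR hΩ u v hu hv
end
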